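/- arXiv:1710.07086 — 2 statements merged into one kernel-verified Lean document; each statement's English description precedes it below -/
import Mathlib

section
/- Let ψ ∈ ℂ⁴ have A = ψ†γ⁰ψ and B = iψ†γ⁰γ⁵ψ not both zero (a regular spinor). Then the current J_μ = ψ†γ⁰γ_μψ is timelike and nonzero: J₀² − J₁² − J₂² − J₃² > 0. -/
open Matrix

/-- γ⁰ in the Weyl (chiral) representation. -/
def gamma0 : Matrix (Fin 4) (Fin 4) ℂ :=
  !![0, 0, 1, 0; 0, 0, 0, 1; 1, 0, 0, 0; 0, 1, 0, 0]

/-- γ¹ in the Weyl representation. -/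
def gamma1 : Matrix (Fin 4) (Fin 4) ℂ :=
  !![0, 0, 0, 1; 0, 0, 1, 0; 0, -1, 0, 0; -1, 0, 0, 0]

/-- γ² in the Weyl representation. -/
def gamma2 : Matrix (Fin 4) (Fin 4) ℂ :=
  !![0, 0, 0, -Complex.I; 0, 0, Complex.I, 0; 0, Complex.I, 0, 0; -Complex.I, 0, 0, 0]

/-- γ³ in the Weyl representation. -/
def gamma3 : Matrix (Fin 4) (Fin 4) ℂ :=
  !![0, 0, 1, 0; 0, 0, 0, -1; -1, 0, 0, 0; 0, 1, 0, 0]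

/-- γ⁵ = diag(I₂, −I₂) in the Weyl representation. -/
def gamma5 : Matrix (Fin 4) (Fin 4) ℂ :=
  !![1, 0, 0, 0; 0, 1, 0, 0; 0, 0, -1, 0; 0, 0, 0, -1]

/-- The bilinear ψ† M ψ. -/
noncomputable def bil (M : Matrix (Fin 4) (Fin 4) ℂ) (ψ : Fin 4 → ℂ) : ℂ :=
  star ψ ⬝ᵥ M.mulVec ψ

theorem regular_spinor_timelike_current (ψ : Fin 4 → ℂ)
    (h : ¬(bil gamma0 ψ = 0 ∧ Complex.I * bil (gamma0 * gamma5) ψ = 0)) :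
    ((bil (gamma0 * gamma0) ψ) ^ 2 - (bil (gamma0 * gamma1) ψ) ^ 2
      - (bil (gamma0 * gamma2) ψ) ^ 2 - (bil (gamma0 * gamma3) ψ) ^ 2).im = 0 ∧
    0 < ((bil (gamma0 * gamma0) ψ) ^ 2 - (bil (gamma0 * gamma1) ψ) ^ 2
      - (bil (gamma0 * gamma2) ψ) ^ 2 - (bil (gamma0 * gamma3) ψ) ^ 2).re := by

  set A := bil gamma0 ψ with hAdef
  set B := Complex.I * bil (gamma0 * gamma5) ψ with hBdef
  have key : (bil (gamma0 * gamma0) ψ) ^ 2 - (bil (gamma0 * gamma1) ψ) ^ 2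
      - (bil (gamma0 * gamma2) ψ) ^ 2 - (bil (gamma0 * gamma3) ψ) ^ 2
      = A ^ 2 + B ^ 2 := by
    simp only [hAdef, hBdef, bil, gamma0, gamma1, gamma2, gamma3, gamma5, mulVec, dotProduct,
      Fin.sum_univ_four, Matrix.mul_apply, Matrix.cons_val_zero, Matrix.cons_val_one,
      Matrix.head_cons, Matrix.cons_val', Matrix.cons_val_fin_one, Matrix.empty_val',
      Matrix.head_fin_const, Matrix.cons_val_two, Matrix.cons_val_three, Matrix.tail_cons,
      Matrix.of_apply, Pi.star_apply]
    ring_nf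
    simp only [Complex.I_sq]
    ring
  have hAim : A.im = 0 := by
    simp only [hAdef, bil, gamma0, mulVec, dotProduct, Fin.sum_univ_four,
      Matrix.cons_val_zero, Matrix.cons_val_one, Matrix.head_cons, Matrix.cons_val',
      Matrix.cons_val_fin_one, Matrix.empty_val', Matrix.head_fin_const, Matrix.cons_val_two,
      Matrix.cons_val_three, Matrix.tail_cons, Matrix.of_apply, Pi.star_apply]
    simp [Complex.add_im, Complex.mul_im, Complex.star_def]
    ring
  have hBim : B.im = 0 := by
    simp only [hBdef, bil, gamma0, gamma5, mulVec, dotProduct, Fin.sum_univ_four,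
      Matrix.mul_apply, Matrix.cons_val_zero, Matrix.cons_val_one, Matrix.head_cons,
      Matrix.cons_val', Matrix.cons_val_fin_one, Matrix.empty_val', Matrix.head_fin_const,
      Matrix.cons_val_two, Matrix.cons_val_three, Matrix.tail_cons, Matrix.of_apply,
      Pi.star_apply]
    simp [Complex.add_im, Complex.mul_im, Complex.mul_re, Complex.star_def]
    ring
  rw [key]
  have him : (A ^ 2 + B ^ 2).im = 0 := by
    simp [pow_two, Complex.add_im, Complex.mul_im, hAim, hBim]
  have hre : (A ^ 2 + B ^ 2).re = A.re ^ 2 + B.re ^ 2 := by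
    simp [pow_two, Complex.add_re, Complex.mul_re, hAim, hBim]
  refine ⟨him, ?_⟩
  rw [hre]
  have hne : A.re ≠ 0 ∨ B.re ≠ 0 := by
    by_contra hc
    push_neg at hc
    exact h ⟨Complex.ext hc.1 hAim, Complex.ext hc.2 hBim⟩
  rcases hne with h1 | h1
  · have h2 : 0 < A.re ^ 2 := by positivity
    nlinarith [sq_nonneg B.re]
  · have h2 : 0 < B.re ^ 2 := by positivity
    nlinarith [sq_nonneg A.re]
end

section
/- Let ψ : ℝ⁴ → ℂ⁴ and θ : ℝ⁴ → ℝ be differentiable and m ∈ ℝ, and suppose ψ satisfies the exotic Dirac equation i·γ^μ(∂_μψ + (∂_μθ)ψ) = m·ψ pointwise (sum over μ = 0,1,2,3). Then the current J^μ = ψ†γ⁰γ^μψ satisfies ∂_μJ^μ + 2(∂_μθ)J^μ = 0, i.e. ∂_0J⁰ + ∂_1J¹ + ∂_2J² + ∂_3J³ + 2(∂_0θ·J⁰ + ∂_1θ·J¹ + ∂_2θ·J² + ∂_3θ·J³) = 0. -/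
open Matrix

/-- Partial derivative of a function on ℝ⁴ along the μ-th coordinate direction. -/
noncomputable def pd {E : Type*} [NormedAddCommGroup E] [NormedSpace ℝ E]
    (f : (Fin 4 → ℝ) → E) (μ : Fin 4) (x : Fin 4 → ℝ) : E :=
  fderiv ℝ f x (Pi.single μ 1)

/-!
Write `D_μψ = ∂_μψ + (∂_μθ)ψ`. Because `θ` is real, `∂_μJ^μ + 2(∂_μθ)J^μ` equals
`Σ_μ ((D_μψ)†γ⁰γ^μψ + ψ†γ⁰γ^μ D_μψ)`. The relation `γ⁰γ^μ = (γ^μ)†γ⁰` turns the first sum into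
`(γ^μD_μψ)†γ⁰ψ`, and the exotic Dirac equation `γ^μD_μψ = -imψ` makes the two sums
`± im ψ†γ⁰ψ`, which cancel.
-/

section Calculus

variable {𝕜 𝔸 E ι : Type*} [NontriviallyNormedField 𝕜] [NormedCommRing 𝔸] [NormedAlgebra 𝕜 𝔸]
  [NormedAddCommGroup E] [NormedSpace 𝕜 E] [Fintype ι] {f g : E → ι → 𝔸} {x : E}

theorem fderiv_dotProduct_apply (hf : DifferentiableAt 𝕜 f x) (hg : DifferentiableAt 𝕜 g x)
    (v : E) :
    fderiv 𝕜 (fun y => f y ⬝ᵥ g y) x v = fderiv 𝕜 f x v ⬝ᵥ g x + f x ⬝ᵥ fderiv 𝕜 g x v := by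
  have hfi : ∀ i, DifferentiableAt 𝕜 (fun y => f y i) x := differentiableAt_pi.1 hf
  have hgi : ∀ i, DifferentiableAt 𝕜 (fun y => g y i) x := differentiableAt_pi.1 hg
  simp only [dotProduct]
  rw [fderiv_fun_sum fun i _ => (hfi i).fun_mul (hgi i)]
  simp [fderiv_fun_mul (hfi _) (hgi _), fderiv_apply hf, fderiv_apply hg, Finset.sum_add_distrib,
    mul_comm, add_comm]

variable (𝕜) in
def Matrix.mulVecCLM {m : Type*} [Fintype m] (A : Matrix m ι 𝔸) : (ι → 𝔸) →L[𝕜] (m → 𝔸) where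
  toLinearMap := A.mulVecLin.restrictScalars 𝕜
  cont := continuous_const.matrix_mulVec continuous_id

theorem HasFDerivAt.matrix_mulVec {m : Type*} [Fintype m] (A : Matrix m ι 𝔸)
    {g' : E →L[𝕜] ι → 𝔸} (hg : HasFDerivAt g g' x) :
    HasFDerivAt (fun y => A *ᵥ g y) ((A.mulVecCLM 𝕜).comp g') x :=
  (A.mulVecCLM 𝕜).hasFDerivAt.comp x hg

end Calculus

theorem fderiv_star_dotProduct_mulVec_apply {E n : Type*} [NormedAddCommGroup E]
    [NormedSpace ℝ E] [Fintype n] (A : Matrix n n ℂ) {ψ : E → n → ℂ} {x : E}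
    (hψ : DifferentiableAt ℝ ψ x) (v : E) :
    fderiv ℝ (fun y => star (ψ y) ⬝ᵥ A *ᵥ ψ y) x v
      = star (fderiv ℝ ψ x v) ⬝ᵥ A *ᵥ ψ x + star (ψ x) ⬝ᵥ A *ᵥ fderiv ℝ ψ x v := by
  have hstar := hψ.hasFDerivAt.star
  have hmulVec := hψ.hasFDerivAt.matrix_mulVec A
  rw [fderiv_dotProduct_apply hstar.differentiableAt hmulVec.differentiableAt, hstar.fderiv,
    hmulVec.fderiv]
  rfl

theorem star_add_smul_dotProduct_mulVec_add {n : Type*} [Fintype n] (A : Matrix n n ℂ)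
    (d ψ : n → ℂ) (t : ℝ) :
    star (d + t • ψ) ⬝ᵥ A *ᵥ ψ + star ψ ⬝ᵥ A *ᵥ (d + t • ψ)
      = star d ⬝ᵥ A *ᵥ ψ + star ψ ⬝ᵥ A *ᵥ d + 2 * ((t : ℂ) * (star ψ ⬝ᵥ A *ᵥ ψ)) := by
  simp only [star_add, star_smul, star_trivial, mulVec_add, mulVec_smul, add_dotProduct,
    dotProduct_add, smul_dotProduct, dotProduct_smul, Complex.real_smul]
  ring

theorem sum_star_dotProduct_mul_mulVec_add_eq_zero {n ι : Type*} [Fintype n] [Fintype ι]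
    (G : Matrix n n ℂ) (Γ : ι → Matrix n n ℂ) (hΓ : ∀ μ, G * Γ μ = (Γ μ)ᴴ * G)
    (D : ι → n → ℂ) (ψ : n → ℂ) (m : ℝ)
    (hD : Complex.I • ∑ μ, Γ μ *ᵥ D μ = (m : ℂ) • ψ) :
    ∑ μ, (star (D μ) ⬝ᵥ (G * Γ μ) *ᵥ ψ + star ψ ⬝ᵥ (G * Γ μ) *ᵥ D μ) = 0 := by
  have hsum : ∑ μ, Γ μ *ᵥ D μ = (-(Complex.I * m)) • ψ := by
    rw [neg_smul, ← smul_smul, ← hD, smul_smul]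
    simp
  have hleft : ∀ μ, star (D μ) ⬝ᵥ (G * Γ μ) *ᵥ ψ = star (Γ μ *ᵥ D μ) ⬝ᵥ G *ᵥ ψ := fun μ => by
    rw [hΓ, ← mulVec_mulVec, dotProduct_mulVec, star_mulVec]
  have hright : ∀ μ, star ψ ⬝ᵥ (G * Γ μ) *ᵥ D μ = star ψ ⬝ᵥ G *ᵥ (Γ μ *ᵥ D μ) := fun μ => by
    rw [mulVec_mulVec]
  rw [Finset.sum_add_distrib, Finset.sum_congr rfl fun μ _ => hleft μ,
    Finset.sum_congr rfl fun μ _ => hright μ, ← sum_dotProduct, ← star_sum, ← dotProduct_sum,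
    ← mulVec_sum, hsum, star_smul, mulVec_smul, smul_dotProduct, dotProduct_smul, smul_eq_mul,
    smul_eq_mul, ← add_mul]
  simp

theorem pd_bil (M : Matrix (Fin 4) (Fin 4) ℂ) {ψ : (Fin 4 → ℝ) → Fin 4 → ℂ}
    (hψ : Differentiable ℝ ψ) (μ : Fin 4) (x : Fin 4 → ℝ) :
    pd (fun y => bil M (ψ y)) μ x
      = star (pd ψ μ x) ⬝ᵥ M *ᵥ ψ x + star (ψ x) ⬝ᵥ M *ᵥ pd ψ μ x :=
  fderiv_star_dotProduct_mulVec_apply M (hψ x) _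

def gamma : Fin 4 → Matrix (Fin 4) (Fin 4) ℂ := ![gamma0, gamma1, gamma2, gamma3]

theorem gamma0_mul_gamma (μ : Fin 4) : gamma0 * gamma μ = (gamma μ)ᴴ * gamma0 := by
  fin_cases μ <;> ext i j <;> fin_cases i <;> fin_cases j <;>
    simp [gamma, gamma0, gamma1, gamma2, gamma3, mul_apply, Fin.sum_univ_four]

theorem exotic_current_conservation_general
    (ψ : (Fin 4 → ℝ) → (Fin 4 → ℂ)) (θ : (Fin 4 → ℝ) → ℝ) (m : ℝ)
    (hψ : Differentiable ℝ ψ)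
    (hdirac : ∀ x,
      Complex.I • (gamma0.mulVec (pd ψ 0 x + (pd θ 0 x : ℝ) • ψ x)
        + gamma1.mulVec (pd ψ 1 x + (pd θ 1 x : ℝ) • ψ x)
        + gamma2.mulVec (pd ψ 2 x + (pd θ 2 x : ℝ) • ψ x)
        + gamma3.mulVec (pd ψ 3 x + (pd θ 3 x : ℝ) • ψ x))
      = (m : ℂ) • ψ x) :
    ∀ x,
      pd (fun y => bil (gamma0 * gamma0) (ψ y)) 0 x
        + pd (fun y => bil (gamma0 * gamma1) (ψ y)) 1 x
        + pd (fun y => bil (gamma0 * gamma2) (ψ y)) 2 x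
        + pd (fun y => bil (gamma0 * gamma3) (ψ y)) 3 x
        + 2 * (((pd θ 0 x : ℝ) : ℂ) * bil (gamma0 * gamma0) (ψ x)
          + ((pd θ 1 x : ℝ) : ℂ) * bil (gamma0 * gamma1) (ψ x)
          + ((pd θ 2 x : ℝ) : ℂ) * bil (gamma0 * gamma2) (ψ x)
          + ((pd θ 3 x : ℝ) : ℂ) * bil (gamma0 * gamma3) (ψ x)) = 0 := by
  intro x
  set D : Fin 4 → Fin 4 → ℂ := fun μ => pd ψ μ x + (pd θ μ x : ℝ) • ψ x
  have hcovariant : ∀ μ, pd (fun y => bil (gamma0 * gamma μ) (ψ y)) μ x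
      + 2 * (((pd θ μ x : ℝ) : ℂ) * bil (gamma0 * gamma μ) (ψ x))
      = star (D μ) ⬝ᵥ (gamma0 * gamma μ) *ᵥ ψ x + star (ψ x) ⬝ᵥ (gamma0 * gamma μ) *ᵥ D μ :=
    fun μ => by rw [pd_bil _ hψ, star_add_smul_dotProduct_mulVec_add]; rfl
  have hD : Complex.I • ∑ μ, gamma μ *ᵥ D μ = (m : ℂ) • ψ x := by
    simpa [Fin.sum_univ_four, gamma, D] using hdirac x
  calc _ = ∑ μ, (pd (fun y => bil (gamma0 * gamma μ) (ψ y)) μ x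
          + 2 * (((pd θ μ x : ℝ) : ℂ) * bil (gamma0 * gamma μ) (ψ x))) := by
        simp only [Fin.sum_univ_four, gamma, cons_val_zero, cons_val_one, cons_val]
        ring
    _ = 0 := by
      simp only [hcovariant]
      exact sum_star_dotProduct_mul_mulVec_add_eq_zero _ _ gamma0_mul_gamma _ _ _ hD

theorem exotic_current_conservation
    (ψ : (Fin 4 → ℝ) → (Fin 4 → ℂ)) (θ : (Fin 4 → ℝ) → ℝ) (m : ℝ)
    (hψ : Differentiable ℝ ψ) (hθ : Differentiable ℝ θ)
    (hdirac : ∀ x,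
      Complex.I • (gamma0.mulVec (pd ψ 0 x + (pd θ 0 x : ℝ) • ψ x)
        + gamma1.mulVec (pd ψ 1 x + (pd θ 1 x : ℝ) • ψ x)
        + gamma2.mulVec (pd ψ 2 x + (pd θ 2 x : ℝ) • ψ x)
        + gamma3.mulVec (pd ψ 3 x + (pd θ 3 x : ℝ) • ψ x))
      = (m : ℂ) • ψ x) :
    ∀ x,
      pd (fun y => bil (gamma0 * gamma0) (ψ y)) 0 x
        + pd (fun y => bil (gamma0 * gamma1) (ψ y)) 1 x
        + pd (fun y => bil (gamma0 * gamma2) (ψ y)) 2 x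
        + pd (fun y => bil (gamma0 * gamma3) (ψ y)) 3 x
        + 2 * (((pd θ 0 x : ℝ) : ℂ) * bil (gamma0 * gamma0) (ψ x)
          + ((pd θ 1 x : ℝ) : ℂ) * bil (gamma0 * gamma1) (ψ x)
          + ((pd θ 2 x : ℝ) : ℂ) * bil (gamma0 * gamma2) (ψ x)
          + ((pd θ 3 x : ℝ) : ℂ) * bil (gamma0 * gamma3) (ψ x)) = 0 :=
  exotic_current_conservation_general ψ θ m hψ hdirac
end
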